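/- Let X ⊆ ℝⁿ be a nonempty compact convex set and f : ℝⁿ → ℝ twice continuously differentiable with μ·I ⪯ ∇²f(x) ⪯ L·I for all x ∈ X (0 < μ ≤ L), with unique minimizer x* over X. Fix x_k ∈ X, a symmetric positive definite H_k, and set η_k := max{λ_max(H_k⁻¹∇²f(x_k)), λ_max((∇²f(x_k))⁻¹H_k)}. Let x̃*_{k+1} := argmin_{x∈X} ( f(x_k) + ⟨∇f(x_k), x − x_k⟩ + ½‖x − x_k‖²_{H_k} ) and let x_{k+1} := x_k + γ_k (x̃*_{k+1} − x_k) for any step size 0 < γ_k ≤ μ/(L·η_k). Then f(x_{k+1}) − f(x*) ≤ (1 − μγ_k²/(L·η_k)) · (f(x_k) − f(x*)). -/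

import Mathlib

open Matrix
open scoped RealInnerProductSpace

/-- The largest (real) eigenvalue of a matrix, as the supremum of its real spectrum. -/
noncomputable def lamMax {n : ℕ} (M : Matrix (Fin n) (Fin n) ℝ) : ℝ :=
  sSup (spectrum ℝ M)

/-- The smallest (real) eigenvalue of a matrix, as the infimum of its real spectrum. -/
noncomputable def lamMin {n : ℕ} (M : Matrix (Fin n) (Fin n) ℝ) : ℝ :=
  sInf (spectrum ℝ M)

/-- Action of a matrix on a vector of Euclidean space. -/
noncomputable def mApply {n : ℕ} (H : Matrix (Fin n) (Fin n) ℝ)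
    (v : EuclideanSpace ℝ (Fin n)) : EuclideanSpace ℝ (Fin n) :=
  Matrix.toEuclideanCLM (𝕜 := ℝ) H v

/-- The squared matrix "norm" ‖v‖²_H := vᵀ H v. -/
noncomputable def qForm {n : ℕ} (H : Matrix (Fin n) (Fin n) ℝ)
    (v : EuclideanSpace ℝ (Fin n)) : ℝ :=
  ⟪v, mApply H v⟫

/-- Spectral (ℓ² operator) norm of a matrix. -/
noncomputable def mNorm {n : ℕ} (H : Matrix (Fin n) (Fin n) ℝ) : ℝ :=
  ‖Matrix.toEuclideanCLM (𝕜 := ℝ) H‖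

/-!
Smoothness (`∇²f ⪯ L·I` on `X`) bounds `f(x_{k+1})` by `f(x_k)` plus `γ` times the decrease
`⟨∇f(x_k), d⟩ + ½‖d‖²_{H_k}` of the quadratic model along `d = x̃ − x_k`, as soon as
`γL·I ⪯ H_k`; the step size guarantees this because `μ·I ⪯ ∇²f(x_k) ⪯ η·H_k`.
Comparing `x̃` with the feasible point `x_k + β(x* − x_k)`, `β = μ/(Lη)`, and using
`H_k ⪯ η∇²f(x_k) ⪯ ηL·I` together with strong convexity, the model decrease is at most
`β(f(x*) − f(x_k))`. Hence the optimality gap contracts by `1 − γβ ≤ 1 − γ²β`.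
Finally `η ≥ 1`, since `H_k ⪯ η∇²f(x_k) ⪯ η²H_k`; so `γ ≤ 1` and all points used lie in `X`.
-/

open Set
open scoped MatrixOrder

section

variable {n : ℕ}

lemma qForm_eq_dotProduct (H : Matrix (Fin n) (Fin n) ℝ) (v : EuclideanSpace ℝ (Fin n)) :
    qForm H v = v.ofLp ⬝ᵥ H *ᵥ v.ofLp :=
  inner_toEuclideanCLM H v v

lemma qForm_nonneg {H : Matrix (Fin n) (Fin n) ℝ} (hH : H.PosSemidef)
    (v : EuclideanSpace ℝ (Fin n)) : 0 ≤ qForm H v := by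
  simpa [qForm_eq_dotProduct] using hH.dotProduct_mulVec_nonneg v.ofLp

lemma qForm_sub (A B : Matrix (Fin n) (Fin n) ℝ) (v : EuclideanSpace ℝ (Fin n)) :
    qForm (A - B) v = qForm A v - qForm B v := by
  simp only [qForm_eq_dotProduct, sub_mulVec, dotProduct_sub]

lemma qForm_mono {A B : Matrix (Fin n) (Fin n) ℝ} (h : A ≤ B) (v : EuclideanSpace ℝ (Fin n)) :
    qForm A v ≤ qForm B v :=
  sub_nonneg.mp (qForm_sub B A v ▸ qForm_nonneg h v)

lemma qForm_smul_one (c : ℝ) (v : EuclideanSpace ℝ (Fin n)) :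
    qForm (c • 1) v = c * ‖v‖ ^ 2 := by
  simp [qForm, mApply, real_inner_smul_right]

lemma qForm_smul_right (H : Matrix (Fin n) (Fin n) ℝ) (c : ℝ) (v : EuclideanSpace ℝ (Fin n)) :
    qForm H (c • v) = c ^ 2 * qForm H v := by
  simp only [qForm, mApply, map_smul, real_inner_smul_left, real_inner_smul_right]
  ring

lemma le_lamMax_inv_mul_smul {P Q : Matrix (Fin n) (Fin n) ℝ} (hP : P.PosDef)
    (hQ : Q.IsHermitian) : Q ≤ lamMax (P⁻¹ * Q) • P := by
  -- `P⁻¹Q` is similar to the Hermitian `S = R⁻¹QR⁻¹`, `R = √P`, so `S ⪯ λ_max(P⁻¹Q)·I`;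
  -- conjugating by `R` gives the claim.
  set R := CFC.sqrt P
  have hRR : R * R = P := CFC.sqrt_mul_sqrt_self P hP.posSemidef.nonneg
  have hR_sa : IsSelfAdjoint R := (CFC.sqrt_nonneg P).isSelfAdjoint
  have hR : IsUnit R := isUnit_of_mul_isUnit_left (hRR ▸ hP.isUnit)
  have hdet : IsUnit R.det := (isUnit_iff_isUnit_det R).mp hR
  set S := R⁻¹ * Q * R⁻¹
  have hS_sa : IsSelfAdjoint S := IsSelfAdjoint.conjugate_self hQ (IsHermitian.inv hR_sa)
  have hsimilar : P⁻¹ * Q = R⁻¹ * S * R := by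
    simp only [S, ← hRR, Matrix.mul_inv_rev, mul_assoc, nonsing_inv_mul R hdet, mul_one]
  have hspectrum : spectrum ℝ (P⁻¹ * Q) = spectrum ℝ S := by
    rw [hsimilar, ← hR.unit_spec, ← coe_units_inv]
    exact spectrum.units_conjugate'
  have hS : S ≤ algebraMap ℝ _ (lamMax (P⁻¹ * Q)) :=
    le_algebraMap_of_spectrum_le fun x hx =>
      le_csSup (P⁻¹ * Q).finite_real_spectrum.bddAbove (hspectrum ▸ hx)
  calc Q = R * S * R := by
        simp only [S, ← mul_assoc, mul_nonsing_inv R hdet, one_mul]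
        rw [mul_assoc, nonsing_inv_mul R hdet, mul_one]
    _ ≤ R * algebraMap ℝ _ (lamMax (P⁻¹ * Q)) * R := hR_sa.conjugate_le_conjugate hS
    _ = lamMax (P⁻¹ * Q) • P := by
      rw [Algebra.algebraMap_eq_smul_one, mul_smul_comm, smul_mul_assoc, mul_one, hRR]

lemma le_max_lamMax_smul {P Q : Matrix (Fin n) (Fin n) ℝ} (hP : P.PosDef)
    (hQ : Q.IsHermitian) : Q ≤ max (lamMax (P⁻¹ * Q)) (lamMax (Q⁻¹ * P)) • P :=
  (le_lamMax_inv_mul_smul hP hQ).trans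
    (smul_le_smul_of_nonneg_right (le_max_left _ _) hP.posSemidef.nonneg)

end

lemma Matrix.one_le_of_le_smul_of_le_smul {ι : Type*} [Fintype ι] [Nonempty ι]
    {P Q : Matrix ι ι ℝ} {η : ℝ} (hP : P.PosDef) (hQ : Q.PosSemidef)
    (hQP : Q ≤ η • P) (hPQ : P ≤ η • Q) : 1 ≤ η := by
  have hp := hP.dotProduct_mulVec_pos (one_ne_zero : (1 : ι → ℝ) ≠ 0)
  have hq := hQ.dotProduct_mulVec_nonneg 1
  have hqp := (le_iff.mp hQP).dotProduct_mulVec_nonneg 1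
  have hpq := (le_iff.mp hPQ).dotProduct_mulVec_nonneg 1
  simp only [sub_mulVec, smul_mulVec, dotProduct_sub, dotProduct_smul, smul_eq_mul] at hqp hpq
  -- with `p = 𝟙ᵀP𝟙 > 0` and `q = 𝟙ᵀQ𝟙 ≥ 0`, `p ≤ ηq` forces `η > 0`, and then `p ≤ ηq ≤ η²p`
  nlinarith

lemma div_smul_le_of_smul_le_of_le_smul {M : Type*} [AddCommGroup M] [PartialOrder M]
    [Module ℝ M] [PosSMulMono ℝ M] [PosSMulReflectLE ℝ M] {a b c : M} {r η : ℝ}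
    (hab : r • a ≤ b) (hbc : b ≤ η • c) (hη : 0 < η) : (r / η) • a ≤ c := by
  rw [div_eq_inv_mul, ← smul_smul, inv_smul_le_iff_of_pos hη]
  exact hab.trans hbc

lemma le_add_deriv_add_of_deriv2_le {φ φ' φ'' : ℝ → ℝ} {c : ℝ}
    (hφ : ∀ t, HasDerivAt φ (φ' t) t) (hφ' : ∀ t, HasDerivAt φ' (φ'' t) t)
    (hc : ∀ t ∈ Icc (0 : ℝ) 1, φ'' t ≤ c) : φ 1 ≤ φ 0 + φ' 0 + c / 2 := by
  have hslope : ∀ t ∈ Icc (0 : ℝ) 1, φ' t ≤ φ' 0 + c * t := by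
    refine image_le_of_deriv_right_le_deriv_boundary (B' := fun _ => c)
      (fun t _ => (hφ' t).continuousAt.continuousWithinAt)
      (fun t _ => (hφ' t).hasDerivWithinAt) (by simp) (by fun_prop)
      (fun t _ => ?_) (fun t ht => hc t (Ico_subset_Icc_self ht))
    exact (((hasDerivAt_id' t).const_mul c).const_add (φ' 0)).hasDerivWithinAt.congr_deriv
      (mul_one c)
  have hvalue := image_le_of_deriv_right_le_deriv_boundary
    (B := fun t => φ 0 + φ' 0 * t + c / 2 * t ^ 2) (B' := fun t => φ' 0 + c * t)
    (fun t _ => (hφ t).continuousAt.continuousWithinAt)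
    (fun t _ => (hφ t).hasDerivWithinAt) (by simp) (by fun_prop)
    (fun t _ => ?_) (fun t ht => hslope t (Ico_subset_Icc_self ht)) (right_mem_Icc.mpr zero_le_one)
  · simpa using hvalue
  · have := (((hasDerivAt_id' t).const_mul (φ' 0)).const_add (φ 0)).fun_add
      ((hasDerivAt_pow 2 t).const_mul (c / 2))
    exact this.hasDerivWithinAt.congr_deriv (by norm_num; ring)

lemma add_deriv_add_le_of_le_deriv2 {φ φ' φ'' : ℝ → ℝ} {c : ℝ}
    (hφ : ∀ t, HasDerivAt φ (φ' t) t) (hφ' : ∀ t, HasDerivAt φ' (φ'' t) t)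
    (hc : ∀ t ∈ Icc (0 : ℝ) 1, c ≤ φ'' t) : φ 0 + φ' 0 + c / 2 ≤ φ 1 := by
  have := le_add_deriv_add_of_deriv2_le (fun t => (hφ t).neg) (fun t => (hφ' t).neg)
    (c := -c) fun t ht => neg_le_neg (hc t ht)
  simp only [Pi.neg_apply] at this
  linarith

section SecondOrderBounds

variable {n : ℕ} {f : EuclideanSpace ℝ (Fin n) → ℝ}
  {Hess : EuclideanSpace ℝ (Fin n) → Matrix (Fin n) (Fin n) ℝ}

lemma hasDerivAt_add_smul (x d : EuclideanSpace ℝ (Fin n)) (t : ℝ) :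
    HasDerivAt (fun t : ℝ => x + t • d) d t :=
  ((hasDerivAt_id t).smul_const d).const_add x |>.congr_deriv (one_smul ℝ d)

lemma hasDerivAt_comp_add_smul (hf : Differentiable ℝ f) (x d : EuclideanSpace ℝ (Fin n))
    (t : ℝ) : HasDerivAt (fun t : ℝ => f (x + t • d)) ⟪gradient f (x + t • d), d⟫ t :=
  (hf _).hasGradientAt.hasFDerivAt.comp_hasDerivAt t (hasDerivAt_add_smul x d t)

variable (hf : Differentiable ℝ f)
  (hHess : ∀ x, HasFDerivAt (gradient f) (toEuclideanCLM (𝕜 := ℝ) (Hess x)) x)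
include hHess

lemma hasDerivAt_inner_gradient_comp_add_smul (x d : EuclideanSpace ℝ (Fin n)) (t : ℝ) :
    HasDerivAt (fun t : ℝ => ⟪gradient f (x + t • d), d⟫) (qForm (Hess (x + t • d)) d) t := by
  have := ((hHess _).comp_hasDerivAt t (hasDerivAt_add_smul x d t)).inner ℝ
    (hasDerivAt_const t d)
  simpa [qForm, mApply, real_inner_comm] using this

include hf

lemma le_add_inner_gradient_of_qForm_le {x d : EuclideanSpace ℝ (Fin n)} {c : ℝ}
    (hc : ∀ t ∈ Icc (0 : ℝ) 1, qForm (Hess (x + t • d)) d ≤ c) :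
    f (x + d) ≤ f x + ⟪gradient f x, d⟫ + c / 2 := by
  simpa using le_add_deriv_add_of_deriv2_le (hasDerivAt_comp_add_smul hf x d)
    (hasDerivAt_inner_gradient_comp_add_smul hHess x d) hc

lemma add_inner_gradient_le_of_le_qForm {x d : EuclideanSpace ℝ (Fin n)} {c : ℝ}
    (hc : ∀ t ∈ Icc (0 : ℝ) 1, c ≤ qForm (Hess (x + t • d)) d) :
    f x + ⟪gradient f x, d⟫ + c / 2 ≤ f (x + d) := by
  simpa using add_deriv_add_le_of_le_deriv2 (hasDerivAt_comp_add_smul hf x d)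
    (hasDerivAt_inner_gradient_comp_add_smul hHess x d) hc

variable {X : Set (EuclideanSpace ℝ (Fin n))} (hX : Convex ℝ X) {x y : EuclideanSpace ℝ (Fin n)}
  (hx : x ∈ X) (hy : y ∈ X)
include hX hx hy

lemma le_add_inner_gradient_of_hessian_le {L : ℝ} (hL : ∀ z ∈ X, Hess z ≤ L • 1) :
    f y ≤ f x + ⟪gradient f x, y - x⟫ + L / 2 * ‖y - x‖ ^ 2 := by
  have := le_add_inner_gradient_of_qForm_le hf hHess (x := x) (d := y - x) (c := L * ‖y - x‖ ^ 2)
    fun t ht => by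
      rw [← qForm_smul_one]
      exact qForm_mono (hL _ (hX.add_smul_sub_mem hx hy ht)) _
  rw [add_sub_cancel] at this
  linarith

lemma add_inner_gradient_le_of_le_hessian {μ : ℝ} (hμ : ∀ z ∈ X, μ • 1 ≤ Hess z) :
    f x + ⟪gradient f x, y - x⟫ + μ / 2 * ‖y - x‖ ^ 2 ≤ f y := by
  have := add_inner_gradient_le_of_le_qForm hf hHess (x := x) (d := y - x) (c := μ * ‖y - x‖ ^ 2)
    fun t ht => by
      rw [← qForm_smul_one]
      exact qForm_mono (hμ _ (hX.add_smul_sub_mem hx hy ht)) _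
  rw [add_sub_cancel] at this
  linarith

lemma le_add_mul_model_of_hessian_le {L γ : ℝ} {H : Matrix (Fin n) (Fin n) ℝ}
    (hL : ∀ z ∈ X, Hess z ≤ L • 1) (hγ : γ ∈ Icc (0 : ℝ) 1) (hH : (L * γ) • 1 ≤ H) :
    f (x + γ • (y - x)) ≤ f x + γ * (⟪gradient f x, y - x⟫ + qForm H (y - x) / 2) := by
  have hsmooth := le_add_inner_gradient_of_hessian_le hf hHess hX hx
    (hX.add_smul_sub_mem hx hy hγ) hL
  rw [add_sub_cancel_left, real_inner_smul_right, norm_smul, mul_pow, Real.norm_eq_abs,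
    sq_abs] at hsmooth
  have hq : L * γ * ‖y - x‖ ^ 2 ≤ qForm H (y - x) := by
    rw [← qForm_smul_one]
    exact qForm_mono hH _
  linarith [mul_le_mul_of_nonneg_left hq hγ.1]

end SecondOrderBounds

lemma inner_gradient_add_half_qForm_le_of_isMinOn {n : ℕ} {f : EuclideanSpace ℝ (Fin n) → ℝ}
    {X : Set (EuclideanSpace ℝ (Fin n))} (hX : Convex ℝ X) {x y xt : EuclideanSpace ℝ (Fin n)}
    (hx : x ∈ X) (hy : y ∈ X) {H : Matrix (Fin n) (Fin n) ℝ} {c μ β : ℝ}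
    (hxt : IsMinOn (fun w => ⟪gradient f x, w - x⟫ + qForm H (w - x) / 2) X xt)
    (hH : H ≤ c • 1) (hβ : β ∈ Icc (0 : ℝ) 1) (hβc : β * c ≤ μ)
    (hstrong : f x + ⟪gradient f x, y - x⟫ + μ / 2 * ‖y - x‖ ^ 2 ≤ f y) :
    ⟪gradient f x, xt - x⟫ + qForm H (xt - x) / 2 ≤ β * (f y - f x) := by
  have hmin := isMinOn_iff.mp hxt _ (hX.add_smul_sub_mem hx hy hβ)
  simp only [add_sub_cancel_left, real_inner_smul_right, qForm_smul_right] at hmin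
  have hq : qForm H (y - x) ≤ c * ‖y - x‖ ^ 2 := by
    rw [← qForm_smul_one]
    exact qForm_mono hH _
  have hcurv : β ^ 2 * qForm H (y - x) ≤ β * (μ * ‖y - x‖ ^ 2) :=
    calc β ^ 2 * qForm H (y - x) ≤ β * (β * c) * ‖y - x‖ ^ 2 := by
          linarith [mul_le_mul_of_nonneg_left hq (sq_nonneg β)]
      _ ≤ β * (μ * ‖y - x‖ ^ 2) := by
          rw [mul_assoc]
          exact mul_le_mul_of_nonneg_left
            (mul_le_mul_of_nonneg_right hβc (sq_nonneg _)) hβ.1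
  linarith [mul_le_mul_of_nonneg_left hstrong hβ.1]

theorem socgs_pvm_global_bounded_step_general {n : ℕ}
    (X : Set (EuclideanSpace ℝ (Fin n)))
    (hconv : Convex ℝ X)
    (f : EuclideanSpace ℝ (Fin n) → ℝ) (hf : ContDiff ℝ 2 f)
    (Hess : EuclideanSpace ℝ (Fin n) → Matrix (Fin n) (Fin n) ℝ)
    (hHess : ∀ x, HasFDerivAt (gradient f) (Matrix.toEuclideanCLM (𝕜 := ℝ) (Hess x)) x)
    (μ L : ℝ) (hμ : 0 < μ) (hμL : μ ≤ L)
    (hbound : ∀ x ∈ X, (Hess x - μ • (1 : Matrix (Fin n) (Fin n) ℝ)).PosSemidef ∧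
      (L • (1 : Matrix (Fin n) (Fin n) ℝ) - Hess x).PosSemidef)
    (xstar : EuclideanSpace ℝ (Fin n)) (hxstar : xstar ∈ X)
    (hminstar : ∀ y ∈ X, f xstar ≤ f y)
    (xk : EuclideanSpace ℝ (Fin n)) (hxk : xk ∈ X)
    (Hk : Matrix (Fin n) (Fin n) ℝ) (hHk : Hk.PosDef)
    (ηk : ℝ) (hηk : ηk = max (lamMax (Hk⁻¹ * Hess xk)) (lamMax ((Hess xk)⁻¹ * Hk)))
    (fhat : EuclideanSpace ℝ (Fin n) → ℝ)
    (hfhat : ∀ x, fhat x =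
      f xk + ⟪gradient f xk, x - xk⟫ + (1 / 2) * qForm Hk (x - xk))
    (xt : EuclideanSpace ℝ (Fin n)) (hxtX : xt ∈ X)
    (hxtmin : ∀ w ∈ X, fhat xt ≤ fhat w)
    (γ : ℝ) (hγ0 : 0 < γ) (hγ : γ ≤ μ / (L * ηk))
    (xk1 : EuclideanSpace ℝ (Fin n)) (hxk1 : xk1 = xk + γ • (xt - xk)) :
    f xk1 - f xstar ≤ (1 - μ * γ ^ 2 / (L * ηk)) * (f xk - f xstar) := by
  rcases isEmpty_or_nonempty (Fin n) with hn | hn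
  · simp [Subsingleton.elim xk1 xstar, Subsingleton.elim xk xstar]
  have hdf : Differentiable ℝ f := hf.differentiable (by norm_num)
  have hμH : ∀ z ∈ X, μ • 1 ≤ Hess z := fun z hz => (hbound z hz).1
  have hHL : ∀ z ∈ X, Hess z ≤ L • 1 := fun z hz => (hbound z hz).2
  have hQ : (Hess xk).PosDef := by
    simpa using PosDef.posSemidef_add (hbound xk hxk).1 (PosDef.one.smul hμ)
  have hQH : Hess xk ≤ ηk • Hk := hηk ▸ le_max_lamMax_smul hHk hQ.isHermitian
  have hHQ : Hk ≤ ηk • Hess xk := by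
    simpa only [hηk, max_comm] using le_max_lamMax_smul hQ hHk.isHermitian
  have hη : 1 ≤ ηk := one_le_of_le_smul_of_le_smul hHk hQ.posSemidef hQH hHQ
  have hη0 : 0 < ηk := by linarith
  have hLη : 0 < L * ηk := mul_pos (hμ.trans_le hμL) hη0
  set β := μ / (L * ηk)
  have hβ : β ∈ Icc (0 : ℝ) 1 := ⟨(div_pos hμ hLη).le, (div_le_one hLη).mpr (by nlinarith)⟩
  have hγ1 : γ ∈ Icc (0 : ℝ) 1 := ⟨hγ0.le, hγ.trans hβ.2⟩
  have hmodel : IsMinOn (fun w => ⟪gradient f xk, w - xk⟫ + qForm Hk (w - xk) / 2) X xt :=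
    isMinOn_iff.mpr fun w hw => by linarith [hfhat xt, hfhat w, hxtmin w hw]
  have hHk_le : Hk ≤ (ηk * L) • 1 := hHQ.trans <| by
    rw [mul_smul]
    exact smul_le_smul_of_nonneg_left (hHL xk hxk) hη0.le
  have hdecrease := inner_gradient_add_half_qForm_le_of_isMinOn hconv hxk hxstar hmodel hHk_le hβ
    (by rw [mul_comm ηk]; exact (div_mul_cancel₀ μ hLη.ne').le)
    (add_inner_gradient_le_of_le_hessian hdf hHess hconv hxk hxstar hμH)
  have hLγ : L * γ ≤ μ / ηk := by
    rw [le_div_iff₀ hη0]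
    linarith [(le_div_iff₀ hLη).mp hγ]
  have hLγH : (L * γ) • 1 ≤ Hk := (smul_le_smul_of_nonneg_right hLγ zero_le_one).trans
    (div_smul_le_of_smul_le_of_le_smul (hμH xk hxk) hQH hη0)
  have hstep := le_add_mul_model_of_hessian_le hdf hHess hconv hxk hxtX hHL hγ1 hLγH
  rw [← hxk1] at hstep
  have hrate : μ * γ ^ 2 / (L * ηk) ≤ γ * β := by
    rw [show μ * γ ^ 2 / (L * ηk) = γ * (γ * β) by simp only [β]; ring]
    exact mul_le_of_le_one_left (mul_nonneg hγ1.1 hβ.1) hγ1.2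
  linarith [mul_le_mul_of_nonneg_left hdecrease hγ1.1,
    mul_le_mul_of_nonneg_right hrate (sub_nonneg.mpr (hminstar xk hxk))]

/-- global convergence of the PVM step with bounded step size:
with `μ·I ⪯ ∇²f ⪯ L·I` on `X`, `η_k := max{λ_max(H_k⁻¹∇²f(x_k)), λ_max((∇²f(x_k))⁻¹H_k)}`,
`x̃*_{k+1}` the minimizer of the quadratic model over `X`, and
`x_{k+1} = x_k + γ_k(x̃*_{k+1} − x_k)` with `0 < γ_k ≤ μ/(Lη_k)`, one has
`f(x_{k+1}) − f(x*) ≤ (1 − μγ_k²/(Lη_k))(f(x_k) − f(x*))`. -/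
theorem socgs_pvm_global_bounded_step {n : ℕ}
    (X : Set (EuclideanSpace ℝ (Fin n)))
    (hne : X.Nonempty) (hcomp : IsCompact X) (hconv : Convex ℝ X)
    (f : EuclideanSpace ℝ (Fin n) → ℝ) (hf : ContDiff ℝ 2 f)
    (Hess : EuclideanSpace ℝ (Fin n) → Matrix (Fin n) (Fin n) ℝ)
    (hHess : ∀ x, HasFDerivAt (gradient f) (Matrix.toEuclideanCLM (𝕜 := ℝ) (Hess x)) x)
    (μ L : ℝ) (hμ : 0 < μ) (hμL : μ ≤ L)
    (hbound : ∀ x ∈ X, (Hess x - μ • (1 : Matrix (Fin n) (Fin n) ℝ)).PosSemidef ∧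
      (L • (1 : Matrix (Fin n) (Fin n) ℝ) - Hess x).PosSemidef)
    (xstar : EuclideanSpace ℝ (Fin n)) (hxstar : xstar ∈ X)
    (hminstar : ∀ y ∈ X, f xstar ≤ f y)
    (huniq : ∀ z ∈ X, (∀ y ∈ X, f z ≤ f y) → z = xstar)
    (xk : EuclideanSpace ℝ (Fin n)) (hxk : xk ∈ X)
    (Hk : Matrix (Fin n) (Fin n) ℝ) (hHk : Hk.PosDef)
    (ηk : ℝ) (hηk : ηk = max (lamMax (Hk⁻¹ * Hess xk)) (lamMax ((Hess xk)⁻¹ * Hk)))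
    (fhat : EuclideanSpace ℝ (Fin n) → ℝ)
    (hfhat : ∀ x, fhat x =
      f xk + ⟪gradient f xk, x - xk⟫ + (1 / 2) * qForm Hk (x - xk))
    (xt : EuclideanSpace ℝ (Fin n)) (hxtX : xt ∈ X)
    (hxtmin : ∀ w ∈ X, fhat xt ≤ fhat w)
    (γ : ℝ) (hγ0 : 0 < γ) (hγ : γ ≤ μ / (L * ηk))
    (xk1 : EuclideanSpace ℝ (Fin n)) (hxk1 : xk1 = xk + γ • (xt - xk)) :
    f xk1 - f xstar ≤ (1 - μ * γ ^ 2 / (L * ηk)) * (f xk - f xstar) :=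
  socgs_pvm_global_bounded_step_general X hconv f hf Hess hHess μ L hμ hμL hbound xstar hxstar
    hminstar xk hxk Hk hHk ηk hηk fhat hfhat xt hxtX hxtmin γ hγ0 hγ xk1 hxk1
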